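/- arXiv:math/0211311 — 6 statements merged into one kernel-verified Lean document; each statement's English description precedes it below -/
import Mathlib

section
/- The Greechie hypergraph L₁₇ (defined by the 17 blocks above on 17 atoms) admits no two-valued state: there is no function f from its atoms to {0,1} such that every block contains exactly one atom with value 1. -/
/-- The 17 blocks of the Greechie hypergraph L₁₇ on 17 atoms, encoded in `Fin 17` as
`Pᵢ = i` (i = 0..6), `Qᵢ = 7 + i` (i = 0..6), `Rᵢ = 14 + i` (i = 0,1,2). -/
def L17Blocks : Finset (Finset (Fin 17)) :=
  { {0,7,1}, {1,8,2}, {2,9,3}, {3,10,4}, {4,11,5}, {5,12,6}, {6,13,0},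
    {0,4,14}, {7,9,12}, {7,10,16}, {1,11,15}, {8,10,13}, {8,12,14},
    {2,5,16}, {9,11,13}, {3,6,15}, {14,15,16} }

/-- L₁₇ admits no two-valued state: there is no `f : atoms → {0,1}` such that
every block contains exactly one atom with value 1. -/
theorem L17_no_two_valued_state :
    ¬ ∃ f : Fin 17 → Bool,
      ∀ b ∈ L17Blocks, (b.filter (fun a => f a = true)).card = 1 := by
  rintro ⟨f, hf⟩
  set x : Fin 17 → ℕ := fun i => if f i then 1 else 0 with hx
  have key : ∀ a b c : Fin 17, ({a,b,c} : Finset (Fin 17)) ∈ L17Blocks →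
      a ∉ ({b,c} : Finset (Fin 17)) → b ∉ ({c} : Finset (Fin 17)) →
      x a + x b + x c = 1 := by
    intro a b c hmem ha hb
    have h := hf _ hmem
    rw [Finset.card_filter, Finset.sum_insert ha, Finset.sum_insert hb,
      Finset.sum_singleton] at h
    simp only [hx]; omega
  have h1 := key 0 7 1 (by decide) (by decide) (by decide)
  have h2 := key 1 8 2 (by decide) (by decide) (by decide)
  have h3 := key 2 9 3 (by decide) (by decide) (by decide)
  have h4 := key 3 10 4 (by decide) (by decide) (by decide)
  have h5 := key 4 11 5 (by decide) (by decide) (by decide)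
  have h6 := key 5 12 6 (by decide) (by decide) (by decide)
  have h7 := key 6 13 0 (by decide) (by decide) (by decide)
  have h8 := key 0 4 14 (by decide) (by decide) (by decide)
  have h9 := key 7 9 12 (by decide) (by decide) (by decide)
  have h10 := key 7 10 16 (by decide) (by decide) (by decide)
  have h11 := key 1 11 15 (by decide) (by decide) (by decide)
  have h12 := key 8 10 13 (by decide) (by decide) (by decide)
  have h13 := key 8 12 14 (by decide) (by decide) (by decide)
  have h14 := key 2 5 16 (by decide) (by decide) (by decide)
  have h15 := key 9 11 13 (by decide) (by decide) (by decide)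
  have h16 := key 3 6 15 (by decide) (by decide) (by decide)
  have h17 := key 14 15 16 (by decide) (by decide) (by decide)
  omega
end

section
/- Every state s on L₁₇ (a function s : atoms → [0,1] with Σ_{a∈b} s(a) = 1 for each block b) is determined by the single parameter x = s(P₀) ∈ [0, 2/3] as follows: s equals x on the atoms P₀, Q₁, Q₂, R₂; equals 2/3 − x on the atoms P₂, Q₀, Q₆, R₀; and equals 1/3 on all remaining atoms. Conversely, every such assignment with x ∈ [0, 2/3] is a state. Hence the state space of L₁₇ is affinely isomorphic to the segment [0, 2/3]. -/
/-- A state on L₁₇: nonnegative, summing to 1 on every block. -/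
def L17IsState (s : Fin 17 → ℝ) : Prop :=
  (∀ a, 0 ≤ s a) ∧ ∀ b ∈ L17Blocks, ∑ a ∈ b, s a = 1

/-- The state of L₁₇ with parameter `x`: value `x` on P₀, Q₁, Q₂, R₂
(atoms 0, 8, 9, 16), value `2/3 - x` on P₂, Q₀, Q₆, R₀ (atoms 2, 7, 13, 14),
and `1/3` on all remaining atoms. -/
noncomputable def L17StateOf (x : ℝ) : Fin 17 → ℝ := fun a =>
  if a ∈ ({0, 8, 9, 16} : Finset (Fin 17)) then x
  else if a ∈ ({2, 7, 13, 14} : Finset (Fin 17)) then 2/3 - x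
  else 1/3

lemma L17StateOf_apply (x : ℝ) (a : Fin 17) :
    L17StateOf x a = if a ∈ ({0, 8, 9, 16} : Finset (Fin 17)) then x
      else if a ∈ ({2, 7, 13, 14} : Finset (Fin 17)) then 2/3 - x
      else 1/3 := rfl
lemma L17v0 (x : ℝ) : L17StateOf x 0 = x := by rw [L17StateOf_apply, if_pos (by decide)]
lemma L17v1 (x : ℝ) : L17StateOf x 1 = 1/3 := by rw [L17StateOf_apply, if_neg (by decide), if_neg (by decide)]
lemma L17v2 (x : ℝ) : L17StateOf x 2 = 2/3 - x := by rw [L17StateOf_apply, if_neg (by decide), if_pos (by decide)]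
lemma L17v3 (x : ℝ) : L17StateOf x 3 = 1/3 := by rw [L17StateOf_apply, if_neg (by decide), if_neg (by decide)]
lemma L17v4 (x : ℝ) : L17StateOf x 4 = 1/3 := by rw [L17StateOf_apply, if_neg (by decide), if_neg (by decide)]
lemma L17v5 (x : ℝ) : L17StateOf x 5 = 1/3 := by rw [L17StateOf_apply, if_neg (by decide), if_neg (by decide)]
lemma L17v6 (x : ℝ) : L17StateOf x 6 = 1/3 := by rw [L17StateOf_apply, if_neg (by decide), if_neg (by decide)]
lemma L17v7 (x : ℝ) : L17StateOf x 7 = 2/3 - x := by rw [L17StateOf_apply, if_neg (by decide), if_pos (by decide)]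
lemma L17v8 (x : ℝ) : L17StateOf x 8 = x := by rw [L17StateOf_apply, if_pos (by decide)]
lemma L17v9 (x : ℝ) : L17StateOf x 9 = x := by rw [L17StateOf_apply, if_pos (by decide)]
lemma L17v10 (x : ℝ) : L17StateOf x 10 = 1/3 := by rw [L17StateOf_apply, if_neg (by decide), if_neg (by decide)]
lemma L17v11 (x : ℝ) : L17StateOf x 11 = 1/3 := by rw [L17StateOf_apply, if_neg (by decide), if_neg (by decide)]
lemma L17v12 (x : ℝ) : L17StateOf x 12 = 1/3 := by rw [L17StateOf_apply, if_neg (by decide), if_neg (by decide)]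
lemma L17v13 (x : ℝ) : L17StateOf x 13 = 2/3 - x := by rw [L17StateOf_apply, if_neg (by decide), if_pos (by decide)]
lemma L17v14 (x : ℝ) : L17StateOf x 14 = 2/3 - x := by rw [L17StateOf_apply, if_neg (by decide), if_pos (by decide)]
lemma L17v15 (x : ℝ) : L17StateOf x 15 = 1/3 := by rw [L17StateOf_apply, if_neg (by decide), if_neg (by decide)]
lemma L17v16 (x : ℝ) : L17StateOf x 16 = x := by rw [L17StateOf_apply, if_pos (by decide)]

/-- Every state on L₁₇ is of the form `L17StateOf x` with `x = s(P₀) ∈ [0, 2/3]`,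
and conversely each such assignment is a state; hence the state space of L₁₇ is
affinely isomorphic to the segment [0, 2/3]. -/
theorem L17_state_space :
    (∀ s : Fin 17 → ℝ, L17IsState s → s 0 ∈ Set.Icc (0:ℝ) (2/3) ∧ s = L17StateOf (s 0)) ∧
    (∀ x ∈ Set.Icc (0:ℝ) (2/3), L17IsState (L17StateOf x)) := by
  constructor
  · rintro s ⟨hpos, hsum⟩
    have e1 : s 0 + s 7 + s 1 = 1 := by
      have h := hsum {0,7,1} (by decide)
      rw [Finset.sum_insert (by decide), Finset.sum_insert (by decide), Finset.sum_singleton] at h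
      linarith
    have e2 : s 1 + s 8 + s 2 = 1 := by
      have h := hsum {1,8,2} (by decide)
      rw [Finset.sum_insert (by decide), Finset.sum_insert (by decide), Finset.sum_singleton] at h
      linarith
    have e3 : s 2 + s 9 + s 3 = 1 := by
      have h := hsum {2,9,3} (by decide)
      rw [Finset.sum_insert (by decide), Finset.sum_insert (by decide), Finset.sum_singleton] at h
      linarith
    have e4 : s 3 + s 10 + s 4 = 1 := by
      have h := hsum {3,10,4} (by decide)
      rw [Finset.sum_insert (by decide), Finset.sum_insert (by decide), Finset.sum_singleton] at h
      linarith
    have e5 : s 4 + s 11 + s 5 = 1 := by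
      have h := hsum {4,11,5} (by decide)
      rw [Finset.sum_insert (by decide), Finset.sum_insert (by decide), Finset.sum_singleton] at h
      linarith
    have e6 : s 5 + s 12 + s 6 = 1 := by
      have h := hsum {5,12,6} (by decide)
      rw [Finset.sum_insert (by decide), Finset.sum_insert (by decide), Finset.sum_singleton] at h
      linarith
    have e7 : s 6 + s 13 + s 0 = 1 := by
      have h := hsum {6,13,0} (by decide)
      rw [Finset.sum_insert (by decide), Finset.sum_insert (by decide), Finset.sum_singleton] at h
      linarith
    have e8 : s 0 + s 4 + s 14 = 1 := by
      have h := hsum {0,4,14} (by decide)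
      rw [Finset.sum_insert (by decide), Finset.sum_insert (by decide), Finset.sum_singleton] at h
      linarith
    have e9 : s 7 + s 9 + s 12 = 1 := by
      have h := hsum {7,9,12} (by decide)
      rw [Finset.sum_insert (by decide), Finset.sum_insert (by decide), Finset.sum_singleton] at h
      linarith
    have e10 : s 7 + s 10 + s 16 = 1 := by
      have h := hsum {7,10,16} (by decide)
      rw [Finset.sum_insert (by decide), Finset.sum_insert (by decide), Finset.sum_singleton] at h
      linarith
    have e11 : s 1 + s 11 + s 15 = 1 := by
      have h := hsum {1,11,15} (by decide)
      rw [Finset.sum_insert (by decide), Finset.sum_insert (by decide), Finset.sum_singleton] at h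
      linarith
    have e12 : s 8 + s 10 + s 13 = 1 := by
      have h := hsum {8,10,13} (by decide)
      rw [Finset.sum_insert (by decide), Finset.sum_insert (by decide), Finset.sum_singleton] at h
      linarith
    have e13 : s 8 + s 12 + s 14 = 1 := by
      have h := hsum {8,12,14} (by decide)
      rw [Finset.sum_insert (by decide), Finset.sum_insert (by decide), Finset.sum_singleton] at h
      linarith
    have e14 : s 2 + s 5 + s 16 = 1 := by
      have h := hsum {2,5,16} (by decide)
      rw [Finset.sum_insert (by decide), Finset.sum_insert (by decide), Finset.sum_singleton] at h
      linarith
    have e15 : s 9 + s 11 + s 13 = 1 := by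
      have h := hsum {9,11,13} (by decide)
      rw [Finset.sum_insert (by decide), Finset.sum_insert (by decide), Finset.sum_singleton] at h
      linarith
    have e16 : s 3 + s 6 + s 15 = 1 := by
      have h := hsum {3,6,15} (by decide)
      rw [Finset.sum_insert (by decide), Finset.sum_insert (by decide), Finset.sum_singleton] at h
      linarith
    have e17 : s 14 + s 15 + s 16 = 1 := by
      have h := hsum {14,15,16} (by decide)
      rw [Finset.sum_insert (by decide), Finset.sum_insert (by decide), Finset.sum_singleton] at h
      linarith
    refine ⟨⟨hpos 0, by have := hpos 2; linarith⟩, ?_⟩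
    have g0 : s 0 = L17StateOf (s 0) 0 := by rw [L17v0]; try linarith
    have g1 : s 1 = L17StateOf (s 0) 1 := by rw [L17v1]; try linarith
    have g2 : s 2 = L17StateOf (s 0) 2 := by rw [L17v2]; try linarith
    have g3 : s 3 = L17StateOf (s 0) 3 := by rw [L17v3]; try linarith
    have g4 : s 4 = L17StateOf (s 0) 4 := by rw [L17v4]; try linarith
    have g5 : s 5 = L17StateOf (s 0) 5 := by rw [L17v5]; try linarith
    have g6 : s 6 = L17StateOf (s 0) 6 := by rw [L17v6]; try linarith
    have g7 : s 7 = L17StateOf (s 0) 7 := by rw [L17v7]; try linarith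
    have g8 : s 8 = L17StateOf (s 0) 8 := by rw [L17v8]; try linarith
    have g9 : s 9 = L17StateOf (s 0) 9 := by rw [L17v9]; try linarith
    have g10 : s 10 = L17StateOf (s 0) 10 := by rw [L17v10]; try linarith
    have g11 : s 11 = L17StateOf (s 0) 11 := by rw [L17v11]; try linarith
    have g12 : s 12 = L17StateOf (s 0) 12 := by rw [L17v12]; try linarith
    have g13 : s 13 = L17StateOf (s 0) 13 := by rw [L17v13]; try linarith
    have g14 : s 14 = L17StateOf (s 0) 14 := by rw [L17v14]; try linarith
    have g15 : s 15 = L17StateOf (s 0) 15 := by rw [L17v15]; try linarith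
    have g16 : s 16 = L17StateOf (s 0) 16 := by rw [L17v16]; try linarith
    funext a
    fin_cases a
    · exact g0
    · exact g1
    · exact g2
    · exact g3
    · exact g4
    · exact g5
    · exact g6
    · exact g7
    · exact g8
    · exact g9
    · exact g10
    · exact g11
    · exact g12
    · exact g13
    · exact g14
    · exact g15
    · exact g16
  · rintro x ⟨hx0, hx1⟩
    constructor
    · intro a
      have n0 : (0:ℝ) ≤ L17StateOf x 0 := by rw [L17v0]; try linarith
      have n1 : (0:ℝ) ≤ L17StateOf x 1 := by rw [L17v1]; try linarith
      have n2 : (0:ℝ) ≤ L17StateOf x 2 := by rw [L17v2]; try linarith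
      have n3 : (0:ℝ) ≤ L17StateOf x 3 := by rw [L17v3]; try linarith
      have n4 : (0:ℝ) ≤ L17StateOf x 4 := by rw [L17v4]; try linarith
      have n5 : (0:ℝ) ≤ L17StateOf x 5 := by rw [L17v5]; try linarith
      have n6 : (0:ℝ) ≤ L17StateOf x 6 := by rw [L17v6]; try linarith
      have n7 : (0:ℝ) ≤ L17StateOf x 7 := by rw [L17v7]; try linarith
      have n8 : (0:ℝ) ≤ L17StateOf x 8 := by rw [L17v8]; try linarith
      have n9 : (0:ℝ) ≤ L17StateOf x 9 := by rw [L17v9]; try linarith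
      have n10 : (0:ℝ) ≤ L17StateOf x 10 := by rw [L17v10]; try linarith
      have n11 : (0:ℝ) ≤ L17StateOf x 11 := by rw [L17v11]; try linarith
      have n12 : (0:ℝ) ≤ L17StateOf x 12 := by rw [L17v12]; try linarith
      have n13 : (0:ℝ) ≤ L17StateOf x 13 := by rw [L17v13]; try linarith
      have n14 : (0:ℝ) ≤ L17StateOf x 14 := by rw [L17v14]; try linarith
      have n15 : (0:ℝ) ≤ L17StateOf x 15 := by rw [L17v15]; try linarith
      have n16 : (0:ℝ) ≤ L17StateOf x 16 := by rw [L17v16]; try linarith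
      fin_cases a
      · exact n0
      · exact n1
      · exact n2
      · exact n3
      · exact n4
      · exact n5
      · exact n6
      · exact n7
      · exact n8
      · exact n9
      · exact n10
      · exact n11
      · exact n12
      · exact n13
      · exact n14
      · exact n15
      · exact n16
    · intro b hb
      fin_cases hb
      · rw [Finset.sum_insert (by decide), Finset.sum_insert (by decide), Finset.sum_singleton, L17v0, L17v7, L17v1]; ring
      · rw [Finset.sum_insert (by decide), Finset.sum_insert (by decide), Finset.sum_singleton, L17v1, L17v8, L17v2]; ring
      · rw [Finset.sum_insert (by decide), Finset.sum_insert (by decide), Finset.sum_singleton, L17v2, L17v9, L17v3]; ring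
      · rw [Finset.sum_insert (by decide), Finset.sum_insert (by decide), Finset.sum_singleton, L17v3, L17v10, L17v4]; ring
      · rw [Finset.sum_insert (by decide), Finset.sum_insert (by decide), Finset.sum_singleton, L17v4, L17v11, L17v5]; ring
      · rw [Finset.sum_insert (by decide), Finset.sum_insert (by decide), Finset.sum_singleton, L17v5, L17v12, L17v6]; ring
      · rw [Finset.sum_insert (by decide), Finset.sum_insert (by decide), Finset.sum_singleton, L17v6, L17v13, L17v0]; ring
      · rw [Finset.sum_insert (by decide), Finset.sum_insert (by decide), Finset.sum_singleton, L17v0, L17v4, L17v14]; ring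
      · rw [Finset.sum_insert (by decide), Finset.sum_insert (by decide), Finset.sum_singleton, L17v7, L17v9, L17v12]; ring
      · rw [Finset.sum_insert (by decide), Finset.sum_insert (by decide), Finset.sum_singleton, L17v7, L17v10, L17v16]; ring
      · rw [Finset.sum_insert (by decide), Finset.sum_insert (by decide), Finset.sum_singleton, L17v1, L17v11, L17v15]; ring
      · rw [Finset.sum_insert (by decide), Finset.sum_insert (by decide), Finset.sum_singleton, L17v8, L17v10, L17v13]; ring
      · rw [Finset.sum_insert (by decide), Finset.sum_insert (by decide), Finset.sum_singleton, L17v8, L17v12, L17v14]; ring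
      · rw [Finset.sum_insert (by decide), Finset.sum_insert (by decide), Finset.sum_singleton, L17v2, L17v5, L17v16]; ring
      · rw [Finset.sum_insert (by decide), Finset.sum_insert (by decide), Finset.sum_singleton, L17v9, L17v11, L17v13]; ring
      · rw [Finset.sum_insert (by decide), Finset.sum_insert (by decide), Finset.sum_singleton, L17v3, L17v6, L17v15]; ring
      · rw [Finset.sum_insert (by decide), Finset.sum_insert (by decide), Finset.sum_singleton, L17v14, L17v15, L17v16]; ring
end

section
/- Consider the 3×3×3 grid hypergraph L₂₇: atoms are the points of {0,1,2}³ and blocks are the 27 axis-parallel lines (sets of 3 points agreeing in two coordinates). This hypergraph is (3,3)-homogeneous, and it has exactly 12 two-valued states, i.e., the functions f : {0,1,2}³ → {0,1} such that every axis-parallel line contains exactly one point with f = 1 number exactly 12. -/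
/-- Atoms of L₂₇: the points of the 3×3×3 grid. -/
abbrev L27Atom := Fin 3 × Fin 3 × Fin 3

/-- Blocks of L₂₇: the 27 axis-parallel lines of the 3×3×3 grid. -/
def L27Blocks : Finset (Finset L27Atom) :=
  ((Finset.univ : Finset (Fin 3 × Fin 3)).image
      (fun p => Finset.univ.image (fun t => ((t, p.1, p.2) : L27Atom)))) ∪
  ((Finset.univ : Finset (Fin 3 × Fin 3)).image
      (fun p => Finset.univ.image (fun t => ((p.1, t, p.2) : L27Atom)))) ∪
  ((Finset.univ : Finset (Fin 3 × Fin 3)).image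
      (fun p => Finset.univ.image (fun t => ((p.1, p.2, t) : L27Atom))))

open Finset

def line₁ (p : Fin 3 × Fin 3) : Finset L27Atom := Finset.univ.image (fun t => (t, p.1, p.2))
def line₂ (p : Fin 3 × Fin 3) : Finset L27Atom := Finset.univ.image (fun t => (p.1, t, p.2))
def line₃ (p : Fin 3 × Fin 3) : Finset L27Atom := Finset.univ.image (fun t => (p.1, p.2, t))

lemma mem_blocks {b : Finset L27Atom} :
    b ∈ L27Blocks ↔ (∃ p, b = line₁ p) ∨ (∃ p, b = line₂ p) ∨ (∃ p, b = line₃ p) := by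
  simp [L27Blocks, line₁, line₂, line₃, Finset.mem_union, Finset.mem_image, eq_comm, or_assoc]

lemma card_line₁ (p) : (line₁ p).card = 3 := by
  rw [line₁, Finset.card_image_of_injective _ (fun a b h => by simpa using h)]
  simp
example : True := trivial

lemma mem_line₁ {a : L27Atom} {p} : a ∈ line₁ p ↔ p = (a.2.1, a.2.2) := by
  simp only [line₁, Finset.mem_image, Finset.mem_univ, true_and, Prod.ext_iff]
  constructor
  · rintro ⟨t, h1, h2, h3⟩; exact ⟨h2, h3⟩
  · rintro ⟨h1, h2⟩; exact ⟨a.1, rfl, h1, h2⟩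

lemma mem_line₂ {a : L27Atom} {p} : a ∈ line₂ p ↔ p = (a.1, a.2.2) := by
  simp only [line₂, Finset.mem_image, Finset.mem_univ, true_and, Prod.ext_iff]
  constructor
  · rintro ⟨t, h1, h2, h3⟩; exact ⟨h1, h3⟩
  · rintro ⟨h1, h2⟩; exact ⟨a.2.1, h1, rfl, h2⟩

lemma mem_line₃ {a : L27Atom} {p} : a ∈ line₃ p ↔ p = (a.1, a.2.1) := by
  simp only [line₃, Finset.mem_image, Finset.mem_univ, true_and, Prod.ext_iff]
  constructor
  · rintro ⟨t, h1, h2, h3⟩; exact ⟨h1, h2⟩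
  · rintro ⟨h1, h2⟩; exact ⟨a.2.2, h1, h2, rfl⟩

lemma l12 (p q) : line₁ p ≠ line₂ q := by
  intro h
  have h0 : ((0 : Fin 3), p.1, p.2) ∈ line₂ q := by
    rw [← h]; exact mem_line₁.2 rfl
  have h1 : ((1 : Fin 3), p.1, p.2) ∈ line₂ q := by
    rw [← h]; exact mem_line₁.2 rfl
  rw [mem_line₂] at h0 h1
  simpa [Prod.ext_iff] using (h0.symm.trans h1)

lemma l13 (p q) : line₁ p ≠ line₃ q := by
  intro h
  have h0 : ((0 : Fin 3), p.1, p.2) ∈ line₃ q := by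
    rw [← h]; exact mem_line₁.2 rfl
  have h1 : ((1 : Fin 3), p.1, p.2) ∈ line₃ q := by
    rw [← h]; exact mem_line₁.2 rfl
  rw [mem_line₃] at h0 h1
  simpa [Prod.ext_iff] using (h0.symm.trans h1)

lemma l23 (p q) : line₂ p ≠ line₃ q := by
  intro h
  have h0 : ((p.1 : Fin 3), 0, p.2) ∈ line₃ q := by
    rw [← h]; exact mem_line₂.2 rfl
  have h1 : ((p.1 : Fin 3), 1, p.2) ∈ line₃ q := by
    rw [← h]; exact mem_line₂.2 rfl
  rw [mem_line₃] at h0 h1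
  simpa [Prod.ext_iff] using (h0.symm.trans h1)

lemma filter_blocks (a : L27Atom) :
    L27Blocks.filter (fun b => a ∈ b) = {line₁ (a.2.1, a.2.2), line₂ (a.1, a.2.2), line₃ (a.1, a.2.1)} := by
  ext b
  simp only [Finset.mem_filter, mem_blocks, Finset.mem_insert, Finset.mem_singleton]
  constructor
  · rintro ⟨(⟨p, rfl⟩ | ⟨p, rfl⟩ | ⟨p, rfl⟩), hm⟩
    · left; rw [mem_line₁.1 hm]
    · right; left; rw [mem_line₂.1 hm]
    · right; right; rw [mem_line₃.1 hm]
  · rintro (rfl | rfl | rfl)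
    · exact ⟨Or.inl ⟨_, rfl⟩, mem_line₁.2 rfl⟩
    · exact ⟨Or.inr (Or.inl ⟨_, rfl⟩), mem_line₂.2 rfl⟩
    · exact ⟨Or.inr (Or.inr ⟨_, rfl⟩), mem_line₃.2 rfl⟩

lemma part2 (a : L27Atom) : (L27Blocks.filter (fun b => a ∈ b)).card = 3 := by
  rw [filter_blocks]
  rw [Finset.card_insert_of_notMem (by simp [l12, l13]),
      Finset.card_insert_of_notMem (by simp [l23]), Finset.card_singleton]

lemma uniqBool {p : Fin 3 → Bool} (h : (Finset.univ.filter fun z => p z = true).card = 1) :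
    ∀ z, (p z = true ↔ z = (if p 0 then 0 else if p 1 then 1 else 2)) := by
  obtain ⟨a, ha⟩ := Finset.card_eq_one.mp h
  have hz : ∀ z, p z = true ↔ z = a := by
    intro z
    have : z ∈ filter (fun z => p z = true) univ ↔ z ∈ ({a} : Finset (Fin 3)) := by rw [ha]
    simpa using this
  have : (if p 0 then (0:Fin 3) else if p 1 then 1 else 2) = a := by
    fin_cases a <;> simp_all [hz]
  rw [this]; exact hz

/-- Latin squares of order 3. -/
def Latin (g : Fin 3 × Fin 3 → Fin 3) : Prop :=
  (∀ y z, (Finset.univ.filter fun x => g (x, y) = z).card = 1) ∧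
  (∀ x z, (Finset.univ.filter fun y => g (x, y) = z).card = 1)

/-- characterization of the state property -/
lemma prop_iff (f : L27Atom → Bool) :
    (∀ b ∈ L27Blocks, (b.filter (fun a => f a = true)).card = 1) ↔
    ((∀ p : Fin 3 × Fin 3, (Finset.univ.filter fun t => f (t, p.1, p.2) = true).card = 1) ∧
     (∀ p : Fin 3 × Fin 3, (Finset.univ.filter fun t => f (p.1, t, p.2) = true).card = 1) ∧
     (∀ p : Fin 3 × Fin 3, (Finset.univ.filter fun t => f (p.1, p.2, t) = true).card = 1)) := by
  have c1 : ∀ p, ((line₁ p).filter (fun a => f a = true)).card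
      = (Finset.univ.filter fun t => f (t, p.1, p.2) = true).card := by
    intro p
    rw [line₁, Finset.filter_image, Finset.card_image_of_injective _ (fun a b h => by simpa using h)]
  have c2 : ∀ p, ((line₂ p).filter (fun a => f a = true)).card
      = (Finset.univ.filter fun t => f (p.1, t, p.2) = true).card := by
    intro p
    rw [line₂, Finset.filter_image, Finset.card_image_of_injective _ (fun a b h => by simpa using h)]
  have c3 : ∀ p, ((line₃ p).filter (fun a => f a = true)).card
      = (Finset.univ.filter fun t => f (p.1, p.2, t) = true).card := by
    intro p
    rw [line₃, Finset.filter_image, Finset.card_image_of_injective _ (fun a b h => by simpa using h)]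
  constructor
  · intro h
    exact ⟨fun p => (c1 p) ▸ h _ (mem_blocks.2 (Or.inl ⟨p, rfl⟩)),
           fun p => (c2 p) ▸ h _ (mem_blocks.2 (Or.inr (Or.inl ⟨p, rfl⟩))),
           fun p => (c3 p) ▸ h _ (mem_blocks.2 (Or.inr (Or.inr ⟨p, rfl⟩)))⟩
  · rintro ⟨h1, h2, h3⟩ b hb
    rcases mem_blocks.1 hb with ⟨p, rfl⟩ | ⟨p, rfl⟩ | ⟨p, rfl⟩
    · rw [c1]; exact h1 p
    · rw [c2]; exact h2 p
    · rw [c3]; exact h3 p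

def gOf (f : L27Atom → Bool) (p : Fin 3 × Fin 3) : Fin 3 :=
  if f (p.1, p.2, 0) then 0 else if f (p.1, p.2, 1) then 1 else 2

lemma gOf_spec {f : L27Atom → Bool}
    (h : ∀ p : Fin 3 × Fin 3, (Finset.univ.filter fun t => f (p.1, p.2, t) = true).card = 1)
    (x y z : Fin 3) : f (x, y, z) = true ↔ z = gOf f (x, y) :=
  uniqBool (h (x, y)) z

/-- states ≃ Latin squares -/
noncomputable def stateEquiv :
    {f : L27Atom → Bool // ∀ b ∈ L27Blocks, (b.filter (fun a => f a = true)).card = 1} ≃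
    {g : Fin 3 × Fin 3 → Fin 3 // Latin g} where
  toFun := fun ⟨f, hf⟩ => by
    refine ⟨gOf f, ?_, ?_⟩
    · intro y z
      obtain ⟨h1, h2, h3⟩ := (prop_iff f).1 hf
      rw [← h1 (y, z)]
      congr 1
      apply Finset.filter_congr
      intro x _
      simp only [eq_iff_iff]
      rw [gOf_spec h3 x y z, eq_comm]
    · intro x z
      obtain ⟨h1, h2, h3⟩ := (prop_iff f).1 hf
      rw [← h2 (x, z)]
      congr 1
      apply Finset.filter_congr
      intro y _
      simp only [eq_iff_iff]
      rw [gOf_spec h3 x y z, eq_comm]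
  invFun := fun ⟨g, hg⟩ => by
    refine ⟨fun a => decide (g (a.1, a.2.1) = a.2.2), (prop_iff _).2 ⟨?_, ?_, ?_⟩⟩
    · intro p; simpa using hg.1 p.1 p.2
    · intro p; simpa using hg.2 p.1 p.2
    · intro p
      have : (Finset.univ.filter fun t : Fin 3 => g (p.1, p.2) = t) = {g (p.1, p.2)} := by
        ext t; simp [eq_comm]
      simp [this]
  left_inv := by
    rintro ⟨f, hf⟩
    ext a
    obtain ⟨x, y, z⟩ := a
    obtain ⟨-, -, h3⟩ := (prop_iff f).1 hf
    have := gOf_spec h3 x y z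
    simp only
    rcases hb : f (x, y, z) with _ | _
    · simp only [hb, Bool.false_eq_true, false_iff] at this
      simpa [eq_comm] using this
    · simp only [hb, true_iff] at this
      simp [this]
  right_inv := by
    rintro ⟨g, hg⟩
    ext p
    simp only [gOf]
    rcases p with ⟨x, y⟩
    have key : ∀ w : Fin 3,
        (if decide (w = 0) = true then (0 : Fin 3) else if decide (w = 1) = true then 1 else 2) = w := by
      decide
    simp only
    rw [key]

lemma row_bij {g : Fin 3 × Fin 3 → Fin 3} (hg : Latin g) (y : Fin 3) :
    Function.Bijective (fun x => g (x, y)) :=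
  Function.bijective_iff_existsUnique _ |>.2 fun z =>
    (Fintype.existsUnique_iff_card_one _).2 (hg.1 y z)

lemma col_ne {g : Fin 3 × Fin 3 → Fin 3} (hg : Latin g) {x y y' : Fin 3} (h : y ≠ y') :
    g (x, y) ≠ g (x, y') := by
  intro he
  obtain ⟨w, -, hw⟩ := (Fintype.existsUnique_iff_card_one
    (fun t => g (x, t) = g (x, y))).2 (hg.2 x (g (x, y)))
  exact h ((hw y rfl).trans (hw y' he.symm).symm)

lemma diff_const {p q : Fin 3 → Fin 3} (hp : Function.Bijective p) (hq : Function.Bijective q)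
    (hne : ∀ x, p x ≠ q x) : ∀ x, q x - p x = q 0 - p 0 := by
  have hs : ∑ x : Fin 3, (q x - p x) = 0 := by
    rw [Finset.sum_sub_distrib, Function.Bijective.sum_comp hq (fun i => i),
      Function.Bijective.sum_comp hp (fun i => i), sub_self]
  rw [Fin.sum_univ_three] at hs
  have hd : ∀ x, q x - p x ≠ 0 := fun x => sub_ne_zero.2 fun h => hne x h.symm
  have key : ∀ a b c : Fin 3, a ≠ 0 → b ≠ 0 → c ≠ 0 → a + b + c = 0 → b = a ∧ c = a := by decide
  obtain ⟨h1, h2⟩ := key _ _ _ (hd 0) (hd 1) (hd 2) hs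
  intro x
  fin_cases x
  · rfl
  · exact h1
  · exact h2

lemma structure_thm {g : Fin 3 × Fin 3 → Fin 3} (hg : Latin g) (x y : Fin 3) :
    g (x, y) = g (x, 0) + (g (0, 1) - g (0, 0)) * y := by
  set d := g (0, 1) - g (0, 0) with hdd
  have r1 : ∀ x, g (x, 1) - g (x, 0) = d :=
    diff_const (row_bij hg 0) (row_bij hg 1) (fun x => col_ne hg (by decide))
  have r2 : ∀ x, g (x, 2) - g (x, 0) = g (0, 2) - g (0, 0) :=
    diff_const (row_bij hg 0) (row_bij hg 2) (fun x => col_ne hg (by decide))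
  have hd0 : d ≠ 0 := sub_ne_zero.2 (col_ne hg (by decide))
  have he0 : g (0, 2) - g (0, 0) ≠ 0 := sub_ne_zero.2 (col_ne hg (by decide))
  have hde : d ≠ g (0, 2) - g (0, 0) := by
    intro h
    exact col_ne hg (show (1 : Fin 3) ≠ 2 by decide) (sub_left_inj.mp (hdd ▸ h))
  have key : ∀ a b : Fin 3, a ≠ 0 → b ≠ 0 → a ≠ b → b = a * 2 := by decide
  have h2 : g (0, 2) - g (0, 0) = d * 2 := key _ _ hd0 he0 hde
  fin_cases y
  · show g (x, 0) = g (x, 0) + d * 0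
    simp
  · show g (x, 1) = g (x, 0) + d * 1
    rw [mul_one, ← r1 x]
    open Fin.CommRing in ring
  · show g (x, 2) = g (x, 0) + d * 2
    rw [← h2, ← r2 x]
    open Fin.CommRing in ring

lemma card_filter_equiv (e : Equiv.Perm (Fin 3)) (w : Fin 3) :
    (Finset.univ.filter fun x => e x = w).card = 1 := by
  have : (Finset.univ.filter fun x => e x = w) = {e.symm w} := by
    ext x
    simp [Equiv.apply_eq_iff_eq_symm_apply]
  simp [this]

lemma card_filter_mul {c : Fin 3} (hc : c ≠ 0) (w : Fin 3) :
    (Finset.univ.filter fun y : Fin 3 => c * y = w).card = 1 := by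
  revert hc w; revert c; decide

noncomputable def latinEquiv :
    {g : Fin 3 × Fin 3 → Fin 3 // Latin g} ≃ Equiv.Perm (Fin 3) × {c : Fin 3 // c ≠ 0} where
  toFun := fun ⟨g, hg⟩ =>
    (Equiv.ofBijective _ (row_bij hg 0), ⟨g (0, 1) - g (0, 0), sub_ne_zero.2 (col_ne hg (by decide))⟩)
  invFun := fun ⟨σ, c, hc⟩ => by
    refine ⟨fun p => σ p.1 + c * p.2, ?_, ?_⟩
    · intro y z
      show (Finset.univ.filter fun x => σ x + c * y = z).card = 1
      have : (Finset.univ.filter fun x => σ x + c * y = z)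
          = (Finset.univ.filter fun x => σ x = z - c * y) := by
        apply Finset.filter_congr
        intro x _
        simp [eq_sub_iff_add_eq]
      rw [this, card_filter_equiv]
    · intro x z
      show (Finset.univ.filter fun y => σ x + c * y = z).card = 1
      have : (Finset.univ.filter fun y => σ x + c * y = z)
          = (Finset.univ.filter fun y => c * y = z - σ x) := by
        apply Finset.filter_congr
        intro y _
        simp [eq_sub_iff_add_eq, add_comm]
      rw [this, card_filter_mul hc]
  left_inv := by
    rintro ⟨g, hg⟩
    apply Subtype.ext
    funext p
    show g (p.1, 0) + (g (0, 1) - g (0, 0)) * p.2 = g p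
    rw [← structure_thm hg p.1 p.2]
  right_inv := by
    rintro ⟨σ, c, hc⟩
    refine Prod.ext ?_ (Subtype.ext ?_)
    · apply Equiv.ext
      intro x
      show σ x + c * 0 = σ x
      simp
    · show (σ 0 + c * 1) - (σ 0 + c * 0) = c
      open Fin.CommRing in ring

lemma card_line₂ (p) : (line₂ p).card = 3 := by
  rw [line₂, Finset.card_image_of_injective _ (fun a b h => by simpa using h)]
  simp

lemma card_line₃ (p) : (line₃ p).card = 3 := by
  rw [line₃, Finset.card_image_of_injective _ (fun a b h => by simpa using h)]
  simp

/-- L₂₇ is (3,3)-homogeneous, and it has exactly 12 two-valued states, i.e. exactly 12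
functions `f : {0,1,2}³ → {0,1}` such that every axis-parallel line contains exactly
one point of value 1. -/
theorem L27_homogeneous_and_twelve_states :
    (∀ b ∈ L27Blocks, b.card = 3) ∧
    (∀ a : L27Atom, (L27Blocks.filter (fun b => a ∈ b)).card = 3) ∧
    Fintype.card
      {f : L27Atom → Bool // ∀ b ∈ L27Blocks, (b.filter (fun a => f a = true)).card = 1}
      = 12 := by
  refine ⟨?_, part2, ?_⟩
  · intro b hb
    rcases mem_blocks.1 hb with ⟨p, rfl⟩ | ⟨p, rfl⟩ | ⟨p, rfl⟩
    · exact card_line₁ p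
    · exact card_line₂ p
    · exact card_line₃ p
  · rw [Fintype.card_congr (stateEquiv.trans latinEquiv), Fintype.card_prod, Fintype.card_perm,
      Fintype.card_fin]
    have h2 : Fintype.card {c : Fin 3 // c ≠ 0} = 2 := by decide
    rw [h2]
    rfl
end

section
/- The set of two-valued states on L₂₇ (the 3×3×3 grid hypergraph with axis-parallel lines as blocks) is full: for any two atoms p, q ∈ {0,1,2}³ that do not lie on a common axis-parallel line, there exists a two-valued state f with f(p) = f(q) = 1. -/
/-- Linear-form predicate on atoms: `a*x + b*y + c*z = d` over `ZMod 3`. -/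
def lf (a b c d : ZMod 3) (t : L27Atom) : Prop :=
  a * (t.1.val : ZMod 3) + b * (t.2.1.val : ZMod 3) + c * (t.2.2.val : ZMod 3) = d

instance lfDec : ∀ a b c d, DecidablePred (lf a b c d) := fun _ _ _ _ _ => by
  unfold lf; infer_instance

lemma xline_mem (y z : Fin 3) :
    (Finset.univ.image (fun t => ((t, y, z) : L27Atom))) ∈ L27Blocks := by
  unfold L27Blocks
  refine Finset.mem_union_left _ (Finset.mem_union_left _ ?_)
  exact Finset.mem_image.2 ⟨(y, z), Finset.mem_univ _, rfl⟩

lemma yline_mem (x z : Fin 3) :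
    (Finset.univ.image (fun t => ((x, t, z) : L27Atom))) ∈ L27Blocks := by
  unfold L27Blocks
  refine Finset.mem_union_left _ (Finset.mem_union_right _ ?_)
  exact Finset.mem_image.2 ⟨(x, z), Finset.mem_univ _, rfl⟩

lemma zline_mem (x y : Fin 3) :
    (Finset.univ.image (fun t => ((x, y, t) : L27Atom))) ∈ L27Blocks := by
  unfold L27Blocks
  refine Finset.mem_union_right _ ?_
  exact Finset.mem_image.2 ⟨(x, y), Finset.mem_univ _, rfl⟩

lemma mem_xline (x y z : Fin 3) : ((x,y,z) : L27Atom) ∈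
    (Finset.univ.image (fun t => ((t, y, z) : L27Atom))) :=
  Finset.mem_image.2 ⟨x, Finset.mem_univ _, rfl⟩

lemma mem_yline (x y z : Fin 3) : ((x,y,z) : L27Atom) ∈
    (Finset.univ.image (fun t => ((x, t, z) : L27Atom))) :=
  Finset.mem_image.2 ⟨y, Finset.mem_univ _, rfl⟩

lemma mem_zline (x y z : Fin 3) : ((x,y,z) : L27Atom) ∈
    (Finset.univ.image (fun t => ((x, y, t) : L27Atom))) :=
  Finset.mem_image.2 ⟨z, Finset.mem_univ _, rfl⟩

set_option maxRecDepth 10000 in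
lemma core1 : ∀ (a b c d : ZMod 3) (y z : Fin 3), a ≠ 0 →
    (Finset.univ.filter (fun t : Fin 3 => lf a b c d (t, y, z))).card = 1 := by decide

set_option maxRecDepth 10000 in
lemma core2 : ∀ (a b c d : ZMod 3) (x z : Fin 3), b ≠ 0 →
    (Finset.univ.filter (fun t : Fin 3 => lf a b c d (x, t, z))).card = 1 := by decide

set_option maxRecDepth 10000 in
lemma core3 : ∀ (a b c d : ZMod 3) (x y : Fin 3), c ≠ 0 →
    (Finset.univ.filter (fun t : Fin 3 => lf a b c d (x, y, t))).card = 1 := by decide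

set_option maxRecDepth 100000 in
set_option maxHeartbeats 4000000 in
lemma lemB' : ∀ p q : L27Atom,
    ¬ (p.1 = q.1 ∧ p.2.1 = q.2.1) → ¬ (p.1 = q.1 ∧ p.2.2 = q.2.2) →
    ¬ (p.2.1 = q.2.1 ∧ p.2.2 = q.2.2) →
    ∃ a b c d : ZMod 3, a ≠ 0 ∧ b ≠ 0 ∧ c ≠ 0 ∧ lf a b c d p ∧ lf a b c d q := by decide

lemma filter_image_card {P : L27Atom → Prop} [DecidablePred P]
    (g : Fin 3 → L27Atom) (hg : Function.Injective g) :
    ((Finset.univ.image g).filter P).card = (Finset.univ.filter (P ∘ g)).card := by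
  rw [Finset.filter_image]
  exact Finset.card_image_of_injective _ hg

/-- The set of two-valued states on L₂₇ is full: for any two distinct atoms not lying
on a common axis-parallel line (i.e. non-orthogonal atoms) there is a two-valued state
assigning value 1 to both. -/
theorem L27_states_full :
    ∀ p q : L27Atom, p ≠ q → (¬ ∃ b ∈ L27Blocks, p ∈ b ∧ q ∈ b) →
      ∃ f : L27Atom → Bool,
        (∀ b ∈ L27Blocks, (b.filter (fun a => f a = true)).card = 1) ∧
        f p = true ∧ f q = true := by
  intro p q hpq hnb
  obtain ⟨px, py, pz⟩ := p
  obtain ⟨qx, qy, qz⟩ := q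
  have h1 : ¬ (px = qx ∧ py = qy) := by
    rintro ⟨rfl, rfl⟩
    exact hnb ⟨_, zline_mem px py, mem_zline px py pz, mem_zline px py qz⟩
  have h2 : ¬ (px = qx ∧ pz = qz) := by
    rintro ⟨rfl, rfl⟩
    exact hnb ⟨_, yline_mem px pz, mem_yline px py pz, mem_yline px qy pz⟩
  have h3 : ¬ (py = qy ∧ pz = qz) := by
    rintro ⟨rfl, rfl⟩
    exact hnb ⟨_, xline_mem py pz, mem_xline px py pz, mem_xline qx py pz⟩
  obtain ⟨a, b, c, d, ha, hb, hc, hp, hq⟩ := lemB' (px,py,pz) (qx,qy,qz) h1 h2 h3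
  refine ⟨fun t => decide (lf a b c d t), ?_, by simpa using hp, by simpa using hq⟩
  intro blk hblk
  have hfil : (blk.filter (fun t => decide (lf a b c d t) = true))
      = blk.filter (lf a b c d) := by
    apply Finset.filter_congr; intro t _; simp
  rw [hfil]
  unfold L27Blocks at hblk
  simp only [Finset.mem_union, Finset.mem_image, Finset.mem_univ, true_and] at hblk
  rcases hblk with (⟨⟨y, z⟩, rfl⟩ | ⟨⟨x, z⟩, rfl⟩) | ⟨⟨x, y⟩, rfl⟩
  · rw [filter_image_card _ (fun s t h => by simpa using h)]
    exact core1 a b c d y z ha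
  · rw [filter_image_card _ (fun s t h => by simpa using h)]
    exact core2 a b c d x z hb
  · rw [filter_image_card _ (fun s t h => by simpa using h)]
    exact core3 a b c d x y hc
end

section
/- The Greechie hypergraph H₁(19) on atoms {1,...,19} with the 19 blocks {1,2,3}, {1,4,5}, {1,6,7}, {2,8,9}, {2,10,11}, {3,12,13}, {3,14,15}, {4,8,12}, {4,10,14}, {5,9,16}, {5,11,17}, {6,8,15}, {6,13,16}, {7,9,18}, {7,14,17}, {10,16,19}, {11,13,18}, {12,17,19}, {15,18,19} admits exactly one state, namely the constant function s(i) = 1/3 for all i; i.e., the system of equations Σ_{a∈b} s(a) = 1 over all blocks b, with s(a) ≥ 0, has the unique solution s ≡ 1/3. -/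
/-- The 19 blocks of the hypergraph H₁(19) on atoms {1,...,19}. -/
def H1Blocks : Finset (Finset ℕ) :=
  { {1,2,3}, {1,4,5}, {1,6,7}, {2,8,9}, {2,10,11}, {3,12,13}, {3,14,15},
    {4,8,12}, {4,10,14}, {5,9,16}, {5,11,17}, {6,8,15}, {6,13,16},
    {7,9,18}, {7,14,17}, {10,16,19}, {11,13,18}, {12,17,19}, {15,18,19} }

/-- H₁(19) admits exactly one state, the constant 1/3: every nonnegative solution of
the block equations is constantly 1/3 on the atoms, and the constant 1/3 indeed
satisfies all block equations. -/
theorem H1_unique_state :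
    (∀ s : ℕ → ℝ, (∀ a ∈ Finset.Icc 1 19, 0 ≤ s a) →
      (∀ b ∈ H1Blocks, ∑ a ∈ b, s a = 1) →
      ∀ a ∈ Finset.Icc 1 19, s a = 1/3) ∧
    (∀ b ∈ H1Blocks, ∑ _a ∈ b, (1/3 : ℝ) = 1) := by
  constructor
  · intro s _hpos hb
    simp only [H1Blocks, Finset.forall_mem_insert, Finset.mem_singleton,
      forall_eq, Finset.sum_insert, Finset.mem_insert, Finset.mem_singleton,
      Finset.sum_singleton, OfNat.ofNat_ne_one, Nat.succ_ne_self] at hb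
    norm_num at hb
    obtain ⟨e1,e2,e3,e4,e5,e6,e7,e8,e9,e10,e11,e12,e13,e14,e15,e16,e17,e18,e19⟩ := hb
    intro a ha
    rw [Finset.mem_Icc] at ha; obtain ⟨ha1, ha2⟩ := ha
    interval_cases a <;> linarith
  · intro b hb
    fin_cases hb <;> norm_num
end

section
/- Every state s on the hypergraph H₃(18) — atoms {1,...,18} with blocks {1,2,3}, {1,4,5}, {1,6,7}, {2,8,9}, {2,10,11}, {3,12,13}, {3,14,15}, {4,8,12}, {4,14,16}, {5,10,13}, {5,17,18}, {6,11,12}, {6,16,18}, {7,9,17}, {7,10,15}, {8,15,18}, {9,13,16}, {11,14,17} — is determined by x = s(17) and y = s(18): s equals x on atoms 2,4,6,13,15; equals y on atoms 1,9,10,12,14; and equals 1−x−y on atoms 3,5,7,8,11,16. The state space is affinely isomorphic to the triangle {(x,y) : x ≥ 0, y ≥ 0, x+y ≤ 1}, and hence has exactly 3 extreme points. -/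
/-!
The 18 block equations form a linear system of rank 16 whose solutions are exactly the
functions `H3StateOf x y`; positivity of a state then amounts to `x, y, 1 - x - y ≥ 0`.
The parameter triangle is the convex hull of its three vertices, so it has no other extreme
points, and each vertex is exposed by a linear functional (`-(x + y)`, `x`, `y`).
-/

/-- The 18 blocks of the hypergraph H₃(18) on atoms {1,...,18}. -/
def H3Blocks : Finset (Finset ℕ) :=
  { {1,2,3}, {1,4,5}, {1,6,7}, {2,8,9}, {2,10,11}, {3,12,13}, {3,14,15},
    {4,8,12}, {4,14,16}, {5,10,13}, {5,17,18}, {6,11,12}, {6,16,18},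
    {7,9,17}, {7,10,15}, {8,15,18}, {9,13,16}, {11,14,17} }

/-- A state on H₃(18): nonnegative on the atoms, summing to 1 on every block. -/
def H3IsState (s : ℕ → ℝ) : Prop :=
  (∀ a ∈ Finset.Icc 1 18, 0 ≤ s a) ∧ ∀ b ∈ H3Blocks, ∑ a ∈ b, s a = 1

/-- The state of H₃(18) with parameters `x = s 17`, `y = s 18`: value `x` on atoms
2,4,6,13,15,17; value `y` on atoms 1,9,10,12,14,18; value `1-x-y` on atoms
3,5,7,8,11,16. -/
noncomputable def H3StateOf (x y : ℝ) : ℕ → ℝ := fun a =>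
  if a ∈ ({2,4,6,13,15,17} : Finset ℕ) then x
  else if a ∈ ({1,9,10,12,14,18} : Finset ℕ) then y
  else 1 - x - y

/-- The triangle {(x,y) : x ≥ 0, y ≥ 0, x + y ≤ 1}. -/
def H3Triangle : Set (ℝ × ℝ) := {p | 0 ≤ p.1 ∧ 0 ≤ p.2 ∧ p.1 + p.2 ≤ 1}

open Finset

lemma H3StateOf_blockSum (x y : ℝ) : ∀ b ∈ H3Blocks, ∑ a ∈ b, H3StateOf x y a = 1 := by
  simp only [H3Blocks, mem_insert, mem_singleton, H3StateOf, forall_eq_or_imp, OfNat.one_ne_ofNat,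
    or_self, not_false_eq_true, sum_insert, ↓reduceIte, or_false, Nat.reduceEqDiff, sum_singleton,
    Nat.succ_ne_self, OfNat.ofNat_ne_one, or_true, sub_add_cancel, add_sub_cancel,
    sub_add_add_cancel, forall_eq, true_and, and_self_left]
  constructorm* _ ∧ _ <;> ring

lemma H3StateOf_nonneg {p : ℝ × ℝ} (hp : p ∈ H3Triangle) (a : ℕ) : 0 ≤ H3StateOf p.1 p.2 a := by
  obtain ⟨hx, hy, hxy⟩ := hp
  unfold H3StateOf
  split_ifs <;> linarith

lemma H3IsState_H3StateOf {p : ℝ × ℝ} (hp : p ∈ H3Triangle) : H3IsState (H3StateOf p.1 p.2) :=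
  ⟨fun a _ ↦ H3StateOf_nonneg hp a, H3StateOf_blockSum p.1 p.2⟩

lemma eq_H3StateOf_of_blockSum {s : ℕ → ℝ} (hs : ∀ b ∈ H3Blocks, ∑ a ∈ b, s a = 1) :
    ∀ a ∈ Icc 1 18, s a = H3StateOf (s 17) (s 18) a := by
  simp only [H3Blocks, mem_insert, mem_singleton, forall_eq_or_imp, OfNat.one_ne_ofNat, or_self,
    not_false_eq_true, sum_insert, Nat.reduceEqDiff, sum_singleton, forall_eq] at hs
  casesm* _ ∧ _
  intro a ha
  obtain ⟨ha1, ha18⟩ := mem_Icc.mp ha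
  interval_cases a <;> simp [H3StateOf] <;> linarith

lemma H3IsState.mem_H3Triangle {s : ℕ → ℝ} (hs : H3IsState s) : (s 17, s 18) ∈ H3Triangle := by
  have h5 : s 5 = 1 - s 17 - s 18 := eq_H3StateOf_of_blockSum hs.2 5 (by decide)
  exact ⟨hs.1 17 (by decide), hs.1 18 (by decide), by linarith [hs.1 5 (by decide)]⟩

lemma convex_H3Triangle : Convex ℝ H3Triangle := by
  rintro ⟨x, y⟩ ⟨hx, hy, hxy⟩ ⟨x', y'⟩ ⟨hx', hy', hxy'⟩ a b ha hb hab
  refine ⟨?_, ?_, ?_⟩ <;> simp only [Prod.smul_mk, Prod.mk_add_mk, smul_eq_mul] <;> nlinarith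

lemma H3Triangle_eq_convexHull : H3Triangle = convexHull ℝ {(0, 0), (1, 0), (0, 1)} := by
  refine Set.Subset.antisymm ?_ (convexHull_min ?_ convex_H3Triangle)
  · rintro ⟨x, y⟩ ⟨hx, hy, hxy⟩
    have hmem := (convex_convexHull ℝ {((0 : ℝ), (0 : ℝ)), (1, 0), (0, 1)}).sum_mem
      (t := univ) (w := ![1 - x - y, x, y]) (z := ![(0, 0), (1, 0), (0, 1)])
      (fun i _ ↦ by fin_cases i <;> simp <;> linarith)
      (by simp [Fin.sum_univ_three]; ring)
      (fun i _ ↦ subset_convexHull ℝ _ (by fin_cases i <;> simp))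
    simpa [Fin.sum_univ_three] using hmem
  · rintro v (rfl | rfl | rfl) <;> norm_num [H3Triangle]

lemma vertices_subset_exposedPoints_H3Triangle :
    {(0, 0), (1, 0), (0, 1)} ⊆ H3Triangle.exposedPoints ℝ := by
  open ContinuousLinearMap in
  rintro v (rfl | rfl | rfl)
  · refine ⟨by norm_num [H3Triangle], -(fst ℝ ℝ ℝ + snd ℝ ℝ ℝ), fun ⟨x, y⟩ ⟨hx, hy, hxy⟩ ↦ ?_⟩
    simp only [neg_add_rev, add_apply, neg_apply, coe_snd', coe_fst', neg_zero, add_zero,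
      neg_add_le_iff_le_add, Prod.mk.injEq]
    exact ⟨by linarith, fun h ↦ ⟨by linarith, by linarith⟩⟩
  · refine ⟨by norm_num [H3Triangle], fst ℝ ℝ ℝ, fun ⟨x, y⟩ ⟨hx, hy, hxy⟩ ↦ ?_⟩
    simp only [coe_fst', Prod.mk.injEq]
    exact ⟨by linarith, fun h ↦ ⟨by linarith, by linarith⟩⟩
  · refine ⟨by norm_num [H3Triangle], snd ℝ ℝ ℝ, fun ⟨x, y⟩ ⟨hx, hy, hxy⟩ ↦ ?_⟩
    simp only [coe_snd', Prod.mk.injEq]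
    exact ⟨by linarith, fun h ↦ ⟨by linarith, by linarith⟩⟩

/-- Every state on H₃(18) is determined by `(x, y) = (s 17, s 18)` via `H3StateOf`,
the parameters ranging exactly over the triangle {x ≥ 0, y ≥ 0, x+y ≤ 1}; hence the
state space is affinely isomorphic to this triangle, whose extreme points are exactly
the 3 vertices (0,0), (1,0), (0,1). -/
theorem H3_state_space :
    (∀ s : ℕ → ℝ, H3IsState s →
      (s 17, s 18) ∈ H3Triangle ∧ ∀ a ∈ Finset.Icc 1 18, s a = H3StateOf (s 17) (s 18) a) ∧
    (∀ p ∈ H3Triangle, H3IsState (H3StateOf p.1 p.2)) ∧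
    Set.extremePoints ℝ H3Triangle = {(0,0), (1,0), (0,1)} := by
  refine ⟨fun s hs ↦ ⟨hs.mem_H3Triangle, eq_H3StateOf_of_blockSum hs.2⟩,
    fun p hp ↦ H3IsState_H3StateOf hp, Set.Subset.antisymm ?_ ?_⟩
  · rw [H3Triangle_eq_convexHull]
    exact extremePoints_convexHull_subset
  · exact vertices_subset_exposedPoints_H3Triangle.trans exposedPoints_subset_extremePoints
end
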